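/- arXiv:2302.01625 — 3 statements merged into one kernel-verified Lean document; each statement's English description precedes it below -/
import Mathlib

section
/- Under the stated drift hypotheses, one has 0 < ρ < 1, and the process satisfies the exponential supermartingale conditions: for every n ∈ ℕ, almost surely on the event {X_n ≥ K} it holds that E[e^{η(X_{n+1} − X_n)} | 𝓕_n] ≤ ρ, and almost surely on the event {X_n < K} it holds that E[e^{η(X_{n+1} − K)} | 𝓕_n] ≤ D. -/
/-!
For `|x| ≤ b`, comparing the exponential series term by term gives
`exp x - 1 - x ≤ (x / b) ^ 2 * (exp b - 1 - b)`; with `x = η Δ`, `b = λ k` this is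
`exp (η Δ) ≤ 1 + η Δ + η ^ 2 c`. Taking conditional expectations and using the drift gives
`1 + η ^ 2 c - η ε ≤ ρ` on `{K ≤ X n}`, since `η c < ε / 2`; and `ρ > 0` because `c ≥ k ^ 2 / 2`.
Below `K`, `exp (η (X (n+1) - K)) ≤ exp (η k) exp (η (X n - K))`, whose right side is
`ℱ n`-measurable and at most `exp (λ k)`.
-/

open MeasureTheory Filter Nat

namespace Real

lemma hasSum_pow_add_two_div_factorial (x : ℝ) :
    HasSum (fun n : ℕ => x ^ (n + 2) / (n + 2)!) (exp x - 1 - x) := by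
  have h := (hasSum_nat_add_iff' 2).mpr (exp_eq_exp_ℝ ▸ NormedSpace.expSeries_div_hasSum_exp x)
  simpa [Finset.sum_range_succ, sub_sub] using h

lemma exp_sub_one_sub_le_of_abs_le {x b : ℝ} (hb : 0 < b) (hx : |x| ≤ b) :
    exp x - 1 - x ≤ (x / b) ^ 2 * (exp b - 1 - b) := by
  refine hasSum_le (fun n => ?_) (hasSum_pow_add_two_div_factorial x)
    ((hasSum_pow_add_two_div_factorial b).mul_left _)
  have hpow : x ^ (n + 2) ≤ (x / b) ^ 2 * b ^ (n + 2) :=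
    calc x ^ (n + 2) ≤ |x| ^ (n + 2) := by rw [← abs_pow]; exact le_abs_self _
      _ = x ^ 2 * |x| ^ n := by rw [pow_add, sq_abs, mul_comm]
      _ ≤ x ^ 2 * b ^ n := by gcongr
      _ = (x / b) ^ 2 * b ^ (n + 2) := by field_simp; ring
  rw [mul_div_assoc']
  gcongr

lemma sq_div_two_le_exp_sub_one_sub_div {lam k : ℝ} (hlam : 0 < lam) (hk : 0 ≤ k) :
    k ^ 2 / 2 ≤ (exp (lam * k) - 1 - lam * k) / lam ^ 2 := by
  rw [le_div_iff₀ (by positivity)]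
  linarith [quadratic_le_exp_of_nonneg (mul_nonneg hlam.le hk)]

lemma exp_mul_le_one_add_add_sq_mul {k lam η y : ℝ} (hk : 0 < k) (hlam : 0 < lam)
    (hη : 0 ≤ η) (hηlam : η ≤ lam) (hy : |y| ≤ k) :
    exp (η * y) ≤ 1 + η * y + η ^ 2 * ((exp (lam * k) - 1 - lam * k) / lam ^ 2) := by
  have hηy : |η * y| ≤ lam * k := by
    rw [abs_mul, abs_of_nonneg hη]
    exact mul_le_mul hηlam hy (abs_nonneg y) hlam.le
  have hrem : 0 ≤ exp (lam * k) - 1 - lam * k := by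
    linarith [add_one_le_exp (lam * k)]
  have hratio : (η * y / (lam * k)) ^ 2 ≤ η ^ 2 / lam ^ 2 := by
    rw [div_pow, mul_pow, mul_pow, div_le_div_iff₀ (by positivity) (by positivity)]
    have : y ^ 2 ≤ k ^ 2 := sq_le_sq' (abs_le.1 hy).1 (abs_le.1 hy).2
    nlinarith [sq_nonneg η, sq_nonneg lam, mul_nonneg (sq_nonneg η) (sq_nonneg lam)]
  calc exp (η * y) ≤ 1 + η * y + (η * y / (lam * k)) ^ 2 * (exp (lam * k) - 1 - lam * k) := by
        linarith [exp_sub_one_sub_le_of_abs_le (mul_pos hlam hk) hηy]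
    _ ≤ 1 + η * y + η ^ 2 / lam ^ 2 * (exp (lam * k) - 1 - lam * k) := by gcongr
    _ = 1 + η * y + η ^ 2 * ((exp (lam * k) - 1 - lam * k) / lam ^ 2) := by ring

end Real

open Real

section CondExp

variable {Ω : Type*} {m m0 : MeasurableSpace Ω} {μ : Measure Ω} {k η : ℝ}

lemma condExp_exp_mul_le_of_abs_le [IsFiniteMeasure μ] (hm : m ≤ m0) {lam : ℝ} {Y : Ω → ℝ}
    (hY : AEStronglyMeasurable Y μ) (hYk : ∀ᵐ ω ∂μ, |Y ω| ≤ k) (hk : 0 < k) (hlam : 0 < lam)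
    (hη : 0 ≤ η) (hηlam : η ≤ lam) :
    μ[fun ω => exp (η * Y ω) | m] ≤ᵐ[μ] fun ω =>
      1 + η ^ 2 * ((exp (lam * k) - 1 - lam * k) / lam ^ 2) + η * μ[Y | m] ω := by
  set c := (exp (lam * k) - 1 - lam * k) / lam ^ 2
  have hYint : Integrable Y μ := Integrable.of_bound hY k (by simpa only [norm_eq_abs] using hYk)
  have hexp_int : Integrable (fun ω => exp (η * Y ω)) μ := by
    refine Integrable.of_bound (continuous_exp.comp_aestronglyMeasurable (hY.const_mul η))
      (exp (η * k)) ?_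
    filter_upwards [hYk] with ω hω
    rw [norm_of_nonneg (exp_pos _).le, exp_le_exp]
    exact mul_le_mul_of_nonneg_left (le_of_abs_le hω) hη
  have hlin : μ[(fun _ => 1 + η ^ 2 * c) + η • Y | m] =ᵐ[μ]
      fun ω => 1 + η ^ 2 * c + η * μ[Y | m] ω := by
    filter_upwards [condExp_add (integrable_const (1 + η ^ 2 * c)) (hYint.smul η) m,
      condExp_smul (μ := μ) η Y m] with ω hadd hsmul
    rw [hadd, Pi.add_apply, hsmul, condExp_const hm]
    rfl
  refine (condExp_mono hexp_int ((integrable_const _).add (hYint.smul η)) ?_).trans_eq hlin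
  filter_upwards [hYk] with ω hω
  show exp (η * Y ω) ≤ 1 + η ^ 2 * c + η * Y ω
  linarith [exp_mul_le_one_add_add_sq_mul hk hlam hη hηlam hω]

lemma condExp_exp_mul_le_of_abs_sub_le (hm : m ≤ m0) [SigmaFinite (μ.trim hm)] {Y Z : Ω → ℝ}
    (hZ : Measurable[m] Z) (hYZ : ∀ᵐ ω ∂μ, |Y ω - Z ω| ≤ k) (hη : 0 ≤ η) :
    μ[fun ω => exp (η * Y ω) | m] ≤ᵐ[μ] fun ω => exp (η * k) * exp (η * Z ω) := by
  by_cases hint : Integrable (fun ω => exp (η * Y ω)) μ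
  swap
  · rw [condExp_of_not_integrable hint]
    exact ae_of_all _ fun ω => by positivity
  have hH : StronglyMeasurable[m] fun ω => exp (η * k) * exp (η * Z ω) :=
    (measurable_const.mul (measurable_exp.comp (hZ.const_mul η))).stronglyMeasurable
  -- Since also `Z ≤ Y + k`, the bound is dominated by a multiple of `exp (η * Y)`.
  have hH_int : Integrable (fun ω => exp (η * k) * exp (η * Z ω)) μ := by
    refine (hint.const_mul (exp (η * k) * exp (η * k))).mono' (hH.mono hm).aestronglyMeasurable ?_
    filter_upwards [hYZ] with ω hω
    rw [norm_of_nonneg (by positivity), ← exp_add, ← exp_add, ← exp_add, exp_le_exp]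
    nlinarith [(abs_sub_le_iff.1 hω).2]
  have hmono := condExp_mono (m := m) hint hH_int <| by
    filter_upwards [hYZ] with ω hω
    rw [← exp_add, exp_le_exp, ← mul_add]
    exact mul_le_mul_of_nonneg_left (by linarith [(abs_sub_le_iff.1 hω).1]) hη
  rwa [condExp_of_stronglyMeasurable hm hH hH_int] at hmono

end CondExp

theorem stmt_0_general
    {Ω : Type*} {m0 : MeasurableSpace Ω} {μ : Measure Ω} [IsProbabilityMeasure μ]
    (ℱ : Filtration ℕ m0) (X : ℕ → Ω → ℝ) (hadp : Adapted ℱ X)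
    (k ε K : ℝ) (hk : 0 < k) (hε0 : 0 < ε) (hεk : ε ≤ k)
    (hbdd : ∀ n : ℕ, ∀ᵐ ω ∂μ, |X (n + 1) ω - X n ω| ≤ k)
    (hdrift : ∀ n : ℕ, ∀ᵐ ω ∂μ, K ≤ X n ω →
      (μ[(fun ω' => X (n + 1) ω' - X n ω') | ℱ n]) ω ≤ -ε)
    (lam : ℝ) (hlam : 0 < lam)
    (c η ρ D : ℝ)
    (hc : c = (Real.exp (lam * k) - 1 - lam * k) / lam ^ 2)
    (hη0 : 0 < η) (hηlt : η < min lam (ε / (2 * c)))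
    (hρ : ρ = 1 - η * ε / 2)
    (hD : D = Real.exp (lam * k)) :
    (0 < ρ ∧ ρ < 1) ∧
    (∀ n : ℕ, ∀ᵐ ω ∂μ, K ≤ X n ω →
      (μ[(fun ω' => Real.exp (η * (X (n + 1) ω' - X n ω'))) | ℱ n]) ω ≤ ρ) ∧
    (∀ n : ℕ, ∀ᵐ ω ∂μ, X n ω < K →
      (μ[(fun ω' => Real.exp (η * (X (n + 1) ω' - K))) | ℱ n]) ω ≤ D) := by
  subst hρ hD
  have hηlam : η ≤ lam := (hηlt.trans_le (min_le_left _ _)).le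
  have hcε : ε ^ 2 / 2 ≤ c := hc ▸ (by nlinarith : ε ^ 2 / 2 ≤ k ^ 2 / 2).trans
    (sq_div_two_le_exp_sub_one_sub_div hlam hk.le)
  have hc0 : 0 < c := hcε.trans_lt' (by positivity)
  have hηc : η * (2 * c) < ε := (lt_div_iff₀ (by positivity)).1 (hηlt.trans_le (min_le_right _ _))
  refine ⟨⟨by nlinarith, by nlinarith⟩, fun n => ?_, fun n => ?_⟩
  · have hX : ∀ i, Measurable (X i) := fun i => (hadp i).mono (ℱ.le i) le_rfl
    have hΔ : AEStronglyMeasurable (fun ω => X (n + 1) ω - X n ω) μ :=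
      ((hX (n + 1)).sub (hX n)).aestronglyMeasurable
    filter_upwards [condExp_exp_mul_le_of_abs_le (ℱ.le n) hΔ (hbdd n) hk hlam hη0.le hηlam,
      hdrift n] with ω hexp hdrift hK
    rw [← hc] at hexp
    nlinarith [hdrift hK]
  · have hbdd' : ∀ᵐ ω ∂μ, |(X (n + 1) ω - K) - (X n ω - K)| ≤ k := by
      simpa only [sub_sub_sub_cancel_right] using hbdd n
    filter_upwards [condExp_exp_mul_le_of_abs_sub_le (ℱ.le n)
      ((hadp n).sub measurable_const) hbdd' hη0.le] with ω hexp hlt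
    calc _ ≤ exp (η * k) * exp (η * (X n ω - K)) := hexp
      _ ≤ exp (lam * k) * 1 := by
        gcongr
        exact exp_le_one_iff.2 (mul_nonpos_of_nonneg_of_nonpos hη0.le (by linarith))
      _ = exp (lam * k) := mul_one _

theorem stmt_0
    {Ω : Type*} {m0 : MeasurableSpace Ω} {μ : Measure Ω} [IsProbabilityMeasure μ]
    (ℱ : Filtration ℕ m0) (X : ℕ → Ω → ℝ) (hadp : Adapted ℱ X)
    (x0 : ℝ) (hX0 : ∀ᵐ ω ∂μ, X 0 ω = x0)
    (k ε K : ℝ) (hk : 0 < k) (hε0 : 0 < ε) (hεk : ε ≤ k)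
    (hbdd : ∀ n : ℕ, ∀ᵐ ω ∂μ, |X (n + 1) ω - X n ω| ≤ k)
    (hdrift : ∀ n : ℕ, ∀ᵐ ω ∂μ, K ≤ X n ω →
      (μ[(fun ω' => X (n + 1) ω' - X n ω') | ℱ n]) ω ≤ -ε)
    (lam : ℝ) (hlam : 0 < lam)
    (c η ρ D : ℝ)
    (hc : c = (Real.exp (lam * k) - 1 - lam * k) / lam ^ 2)
    (hη0 : 0 < η) (hηlt : η < min lam (ε / (2 * c)))
    (hρ : ρ = 1 - η * ε / 2)
    (hD : D = Real.exp (lam * k)) :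
    (0 < ρ ∧ ρ < 1) ∧
    (∀ n : ℕ, ∀ᵐ ω ∂μ, K ≤ X n ω →
      (μ[(fun ω' => Real.exp (η * (X (n + 1) ω' - X n ω'))) | ℱ n]) ω ≤ ρ) ∧
    (∀ n : ℕ, ∀ᵐ ω ∂μ, X n ω < K →
      (μ[(fun ω' => Real.exp (η * (X (n + 1) ω' - K))) | ℱ n]) ω ≤ D) :=
  stmt_0_general ℱ X hadp k ε K hk hε0 hεk hbdd hdrift lam hlam c η ρ D hc hη0 hηlt hρ hD
end

section
/- Under the stated drift hypotheses, for all m, n ∈ ℕ, almost surely E[e^{η X_{m+n}} | 𝓕_m] ≤ ρ^n e^{η X_m} + ((1 − ρ^n)/(1 − ρ)) · D e^{η K}. -/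
/-!
Write `exp (η X_{n+1}) = exp (η X_n) · exp (η ΔX_n)`. Since `(exp t - 1 - t) / t²` increases
with `|t|`, an increment `|ΔX| ≤ k` satisfies `exp (η ΔX) ≤ 1 + η ΔX + c η²`; hence
`E[exp (η ΔX_n) | 𝓕_n] ≤ 1 + c η² - η ε ≤ ρ` where `X_n ≥ K`, and `≤ D` everywhere. Pulling out
the `𝓕_n`-measurable factor gives `E[exp (η X_{n+1}) | 𝓕_n] ≤ ρ exp (η X_n) + D exp (η K)`, and
iterating this one-step bound through the tower property produces the geometric sum.
-/

open MeasureTheory Filter Finset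

namespace Real

theorem exp_sub_one_sub_eq_tsum (x : ℝ) :
    exp x - 1 - x = ∑' n : ℕ, x ^ (n + 2) / (n + 2).factorial := by
  simp only [exp_eq_exp_ℝ, NormedSpace.exp_eq_tsum_div]
  rw [← (summable_pow_div_factorial x).sum_add_tsum_nat_add 2]
  simp only [sum_range_succ, range_one, sum_singleton, pow_zero, pow_one, Nat.factorial_zero,
    Nat.factorial_one, Nat.cast_one, div_one]
  ring

theorem sq_mul_exp_sub_one_sub_le {t a : ℝ} (hta : |t| ≤ a) :
    a ^ 2 * (exp t - 1 - t) ≤ t ^ 2 * (exp a - 1 - a) := by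
  have hs (x : ℝ) : Summable fun n : ℕ => x ^ (n + 2) / (n + 2).factorial :=
    (summable_nat_add_iff 2).2 (summable_pow_div_factorial x)
  rw [exp_sub_one_sub_eq_tsum, exp_sub_one_sub_eq_tsum, ← tsum_mul_left, ← tsum_mul_left]
  refine ((hs t).mul_left _).tsum_le_tsum (fun n => ?_) ((hs a).mul_left _)
  rw [mul_div_assoc', mul_div_assoc']
  refine div_le_div_of_nonneg_right ?_ (by positivity)
  calc a ^ 2 * t ^ (n + 2) = a ^ 2 * t ^ 2 * t ^ n := by ring
    _ ≤ a ^ 2 * t ^ 2 * a ^ n := by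
        refine mul_le_mul_of_nonneg_left ?_ (by positivity)
        calc t ^ n ≤ |t| ^ n := (le_abs_self _).trans (abs_pow t n).le
          _ ≤ a ^ n := pow_le_pow_left₀ (abs_nonneg t) hta n
    _ = t ^ 2 * a ^ (n + 2) := by ring

theorem exp_mul_le_one_add_mul_add {lam η k y : ℝ} (hlam : 0 < lam) (hη : 0 ≤ η)
    (hηlam : η ≤ lam) (hy : |y| ≤ k) :
    exp (η * y) ≤ 1 + η * y + (exp (lam * k) - 1 - lam * k) / lam ^ 2 * η ^ 2 := by
  obtain rfl | hk := (abs_nonneg y).trans hy |>.eq_or_lt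
  · simp [abs_nonpos_iff.1 hy]
  have hηy : |η * y| ≤ lam * k := by
    rw [abs_mul, abs_of_nonneg hη]
    exact mul_le_mul hηlam hy (abs_nonneg y) hlam.le
  have hy2 : y ^ 2 ≤ k ^ 2 := sq_le_sq' (abs_le.1 hy).1 (abs_le.1 hy).2
  have hE : 0 ≤ exp (lam * k) - 1 - lam * k := by linarith [add_one_le_exp (lam * k)]
  have key : (lam * k) ^ 2 * (exp (η * y) - 1 - η * y) ≤
      (lam * k) ^ 2 * ((exp (lam * k) - 1 - lam * k) / lam ^ 2 * η ^ 2) :=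
    calc (lam * k) ^ 2 * (exp (η * y) - 1 - η * y)
        ≤ η ^ 2 * y ^ 2 * (exp (lam * k) - 1 - lam * k) := by
          simpa [mul_pow] using sq_mul_exp_sub_one_sub_le hηy
      _ ≤ η ^ 2 * k ^ 2 * (exp (lam * k) - 1 - lam * k) := by gcongr
      _ = (lam * k) ^ 2 * ((exp (lam * k) - 1 - lam * k) / lam ^ 2 * η ^ 2) := by
          field_simp
  linarith [le_of_mul_le_mul_left key (by positivity)]

end Real

namespace MeasureTheory

variable {Ω : Type*} {m m0 : MeasurableSpace Ω} {μ : Measure Ω}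

theorem condExp_const_add_const_mul [IsFiniteMeasure μ] (hm : m ≤ m0) {f : Ω → ℝ}
    (hf : Integrable f μ) (a b : ℝ) :
    μ[fun ω => a + b * f ω | m] =ᵐ[μ] fun ω => a + b * μ[f | m] ω := by
  have hadd := condExp_add (integrable_const a) (hf.smul b) m
  filter_upwards [hadd, condExp_smul b f m] with ω h₁ h₂
  rw [Pi.add_apply, h₂, condExp_const hm] at h₁
  exact h₁

theorem integrable_exp_mul_of_ae_le [IsFiniteMeasure μ] {Y : Ω → ℝ}
    (hY : AEStronglyMeasurable Y μ) {η C : ℝ} (hη : 0 ≤ η) (hYC : ∀ᵐ ω ∂μ, Y ω ≤ C) :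
    Integrable (fun ω => Real.exp (η * Y ω)) μ := by
  refine .of_bound (Real.continuous_exp.comp_aestronglyMeasurable (hY.const_mul η))
    (Real.exp (η * C)) ?_
  filter_upwards [hYC] with ω hω
  rw [Real.norm_eq_abs, Real.abs_exp]
  exact Real.exp_le_exp.2 (mul_le_mul_of_nonneg_left hω hη)

variable {lam η k : ℝ}

theorem condExp_exp_mul_le [IsFiniteMeasure μ] (hm : m ≤ m0) {Y : Ω → ℝ}
    (hY : AEStronglyMeasurable Y μ) (hYk : ∀ᵐ ω ∂μ, |Y ω| ≤ k) (hlam : 0 < lam) (hη : 0 ≤ η)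
    (hηlam : η ≤ lam) :
    μ[fun ω => Real.exp (η * Y ω) | m] ≤ᵐ[μ] fun ω =>
      1 + (Real.exp (lam * k) - 1 - lam * k) / lam ^ 2 * η ^ 2 + η * μ[Y | m] ω := by
  have hYint : Integrable Y μ := .of_bound hY k (by simpa only [Real.norm_eq_abs] using hYk)
  have hexp := integrable_exp_mul_of_ae_le hY hη (hYk.mono fun ω h => (abs_le.1 h).2)
  refine (condExp_mono hexp ((integrable_const _).add (hYint.const_mul η)) ?_).trans_eq
    (condExp_const_add_const_mul hm hYint _ η)
  filter_upwards [hYk] with ω hω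
  simp only [Pi.add_apply]
  linarith [Real.exp_mul_le_one_add_mul_add hlam hη hηlam hω]

theorem condExp_exp_mul_le_of_drift [IsFiniteMeasure μ] (hm : m ≤ m0) {V V' : Ω → ℝ}
    (hV : StronglyMeasurable[m] V) (hV' : StronglyMeasurable V')
    (hexp : Integrable (fun ω => Real.exp (η * V' ω)) μ) {ε K : ℝ}
    (hbdd : ∀ᵐ ω ∂μ, |V' ω - V ω| ≤ k)
    (hdrift : ∀ᵐ ω ∂μ, K ≤ V ω → μ[fun ω' => V' ω' - V ω' | m] ω ≤ -ε)
    (hlam : 0 < lam) (hη : 0 ≤ η) (hηlam : η ≤ lam)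
    (hηc : 2 * ((Real.exp (lam * k) - 1 - lam * k) / lam ^ 2) * η ≤ ε) (hηε : η * ε ≤ 2) :
    μ[fun ω => Real.exp (η * V' ω) | m] ≤ᵐ[μ] fun ω =>
      (1 - η * ε / 2) * Real.exp (η * V ω) + Real.exp (lam * k) * Real.exp (η * K) := by
  set g : Ω → ℝ := fun ω => Real.exp (η * (V' ω - V ω))
  have hY : AEStronglyMeasurable (fun ω => V' ω - V ω) μ :=
    (hV'.sub (hV.mono hm)).aestronglyMeasurable
  have hg : Integrable g μ :=
    integrable_exp_mul_of_ae_le hY hη (hbdd.mono fun _ h => (abs_le.1 h).2)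
  have hfactor : (fun ω => Real.exp (η * V' ω)) = (fun ω => Real.exp (η * V ω)) * g := by
    funext ω
    rw [Pi.mul_apply, ← Real.exp_add]
    ring_nf
  have hpull := condExp_mul_of_stronglyMeasurable_left
    (Real.continuous_exp.comp_stronglyMeasurable (hV.const_mul η)) (hfactor ▸ hexp) hg
  have hgD : ∀ᵐ ω ∂μ, μ[g | m] ω ≤ Real.exp (lam * k) := by
    refine condExp_le_nonneg_const (Real.exp_pos _).le ?_
    filter_upwards [hbdd] with ω hω
    refine Real.exp_le_exp.2 ?_
    calc η * (V' ω - V ω) ≤ η * k := mul_le_mul_of_nonneg_left ((le_abs_self _).trans hω) hη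
      _ ≤ lam * k := mul_le_mul_of_nonneg_right hηlam ((abs_nonneg _).trans hω)
  have hg0 : 0 ≤ᵐ[μ] μ[g | m] := condExp_nonneg (.of_forall fun ω => (Real.exp_pos _).le)
  rw [hfactor]
  filter_upwards [hpull, condExp_exp_mul_le hm hY hbdd hlam hη hηlam, hgD, hg0, hdrift]
    with ω hpull hmgf hgD hg0 hdrift
  rw [hpull, Pi.mul_apply]
  have hB : 0 < Real.exp (lam * k) * Real.exp (η * K) := by positivity
  rcases le_or_gt K (V ω) with hK | hK
  · have hρ : μ[g | m] ω ≤ 1 - η * ε / 2 := by nlinarith [hdrift hK]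
    nlinarith [mul_le_mul_of_nonneg_left hρ (Real.exp_pos (η * V ω)).le]
  · have hVK : Real.exp (η * V ω) ≤ Real.exp (η * K) :=
      Real.exp_le_exp.2 (mul_le_mul_of_nonneg_left hK.le hη)
    have hρV : 0 ≤ (1 - η * ε / 2) * Real.exp (η * V ω) :=
      mul_nonneg (by linarith) (Real.exp_pos _).le
    nlinarith [mul_le_mul hVK hgD hg0 (Real.exp_pos _).le]

theorem condExp_le_geom_of_condExp_succ_le [IsFiniteMeasure μ] {ℱ : Filtration ℕ m0}
    {Z : ℕ → Ω → ℝ} (hZ : StronglyAdapted ℱ Z) (hint : ∀ n, Integrable (Z n) μ) {ρ B : ℝ}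
    (hρ : 0 ≤ ρ) (hstep : ∀ n, μ[Z (n + 1) | ℱ n] ≤ᵐ[μ] fun ω => ρ * Z n ω + B) (m n : ℕ) :
    μ[Z (m + n) | ℱ m] ≤ᵐ[μ] fun ω => ρ ^ n * Z m ω + (∑ i ∈ range n, ρ ^ i) * B := by
  induction n with
  | zero =>
    rw [Nat.add_zero, condExp_of_stronglyMeasurable (ℱ.le m) (hZ m) (hint m)]
    exact .of_forall fun ω => by simp
  | succ n ih =>
    have htower : μ[μ[Z (m + n + 1) | ℱ (m + n)] | ℱ m] =ᵐ[μ] μ[Z (m + n + 1) | ℱ m] :=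
      condExp_condExp_of_le (ℱ.mono (m.le_add_right n)) (ℱ.le (m + n))
    have hmono : μ[μ[Z (m + n + 1) | ℱ (m + n)] | ℱ m] ≤ᵐ[μ]
        μ[fun ω => B + ρ * Z (m + n) ω | ℱ m] :=
      condExp_mono integrable_condExp ((integrable_const B).add ((hint (m + n)).const_mul ρ))
        ((hstep (m + n)).trans (.of_forall fun ω => (add_comm _ _).le))
    filter_upwards [htower, hmono, condExp_const_add_const_mul (ℱ.le m) (hint (m + n)) B ρ, ih]
      with ω htower hmono hlin ih
    calc μ[Z (m + n + 1) | ℱ m] ω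
        = μ[μ[Z (m + n + 1) | ℱ (m + n)] | ℱ m] ω := htower.symm
      _ ≤ B + ρ * μ[Z (m + n) | ℱ m] ω := hmono.trans_eq hlin
      _ ≤ B + ρ * (ρ ^ n * Z m ω + (∑ i ∈ range n, ρ ^ i) * B) := by gcongr
      _ = ρ ^ (n + 1) * Z m ω + (∑ i ∈ range (n + 1), ρ ^ i) * B := by
        rw [geom_sum_succ]; ring

theorem ae_abs_sub_zero_le_of_abs_succ_sub_le {X : ℕ → Ω → ℝ} {k : ℝ}
    (hbdd : ∀ n, ∀ᵐ ω ∂μ, |X (n + 1) ω - X n ω| ≤ k) (n : ℕ) :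
    ∀ᵐ ω ∂μ, |X n ω - X 0 ω| ≤ n * k := by
  induction n with
  | zero => simp
  | succ n ih =>
    filter_upwards [ih, hbdd n] with ω ih hω
    push_cast
    linarith [abs_sub_le (X (n + 1) ω) (X n ω) (X 0 ω)]

end MeasureTheory

theorem stmt_1
    {Ω : Type*} {m0 : MeasurableSpace Ω} {μ : Measure Ω} [IsProbabilityMeasure μ]
    (ℱ : Filtration ℕ m0) (X : ℕ → Ω → ℝ) (hadp : Adapted ℱ X)
    (x0 : ℝ) (hX0 : ∀ᵐ ω ∂μ, X 0 ω = x0)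
    (k ε K : ℝ) (hk : 0 < k) (hε0 : 0 < ε) (hεk : ε ≤ k)
    (hbdd : ∀ n : ℕ, ∀ᵐ ω ∂μ, |X (n + 1) ω - X n ω| ≤ k)
    (hdrift : ∀ n : ℕ, ∀ᵐ ω ∂μ, K ≤ X n ω →
      (μ[(fun ω' => X (n + 1) ω' - X n ω') | ℱ n]) ω ≤ -ε)
    (lam : ℝ) (hlam : 0 < lam)
    (c η ρ D : ℝ)
    (hc : c = (Real.exp (lam * k) - 1 - lam * k) / lam ^ 2)
    (hη0 : 0 < η) (hηlt : η < min lam (ε / (2 * c)))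
    (hρ : ρ = 1 - η * ε / 2)
    (hD : D = Real.exp (lam * k)) :
    ∀ m n : ℕ, ∀ᵐ ω ∂μ,
      (μ[(fun ω' => Real.exp (η * X (m + n) ω')) | ℱ m]) ω ≤
        ρ ^ n * Real.exp (η * X m ω) + ((1 - ρ ^ n) / (1 - ρ)) * (D * Real.exp (η * K)) := by
  intro m n
  have hlk : 0 < lam * k := by positivity
  have hc0 : 0 < c := hc ▸ div_pos (by linarith [Real.add_one_lt_exp hlk.ne']) (by positivity)
  have hck : k ^ 2 / 2 ≤ c := by
    rw [hc, le_div_iff₀ (by positivity)]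
    nlinarith [Real.quadratic_le_exp_of_nonneg hlk.le]
  have hηlam : η ≤ lam := (hηlt.trans_le (min_le_left _ _)).le
  have hηc : 2 * c * η ≤ ε :=
    ((lt_div_iff₀' (by positivity)).1 (hηlt.trans_le (min_le_right _ _))).le
  have hηε : η * ε ≤ 2 := by nlinarith
  have hρ1 : ρ < 1 := by rw [hρ]; nlinarith
  have hXm (n : ℕ) : StronglyMeasurable (X n) :=
    ((hadp n).mono (ℱ.le n) le_rfl).stronglyMeasurable
  have hint (n : ℕ) : Integrable (fun ω => Real.exp (η * X n ω)) μ := by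
    refine integrable_exp_mul_of_ae_le (hXm n).aestronglyMeasurable hη0.le (C := x0 + n * k) ?_
    filter_upwards [hX0, ae_abs_sub_zero_le_of_abs_succ_sub_le hbdd n] with ω h0 hn
    linarith [le_abs_self (X n ω - X 0 ω)]
  have hstep (n : ℕ) : μ[fun ω => Real.exp (η * X (n + 1) ω) | ℱ n] ≤ᵐ[μ]
      fun ω => ρ * Real.exp (η * X n ω) + D * Real.exp (η * K) := by
    rw [hρ, hD]
    exact condExp_exp_mul_le_of_drift (ℱ.le n) (hadp n).stronglyMeasurable (hXm (n + 1))
      (hint (n + 1)) (hbdd n) (hdrift n) hlam hη0.le hηlam (hc ▸ hηc) hηε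
  have hgeom := condExp_le_geom_of_condExp_succ_le (Z := fun n ω => Real.exp (η * X n ω))
    (fun n => ((hadp n).const_mul η).exp.stronglyMeasurable) hint (by rw [hρ]; linarith) hstep m n
  rwa [geom_sum_eq hρ1.ne, ← neg_div_neg_eq, neg_sub, neg_sub] at hgeom
end

section
/- Under the stated drift hypotheses, for every m ∈ ℕ and every s with 1 < s < ρ^{-1}, almost surely E[s^{τ_{K,m}} | 𝓕_m] ≤ e^{η(X_m − K)} · (s − 1)/(1 − ρ s) + 1. -/
/-!
The Lyapunov function `W n = exp (η (X n - K))` contracts by the factor `ρ` over one step taken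
from above `K`. Bounded increments give `exp (η Δ) ≤ 1 + η Δ + c η²` (because
`(exp y - 1 - y) / y²` is increasing), and the drift condition then yields
`E[W (n+1); B] ≤ (1 + c η² - η ε) E[W n; B] ≤ ρ E[W n; B]` for `B ∈ 𝓕 n` inside `{K ≤ X n}`.
Iterating along the events `{τ > n} ∈ 𝓕 (m + n)`, on which `W (m + n) ≥ 1`, gives
`P(A ∩ {τ > n}) ≤ ρⁿ E[W m; A]` for `A ∈ 𝓕 m`. Summing `s ^ τ = 1 + ∑ₙ (s - 1) sⁿ 1{τ > n}`
against these geometric tails gives `E[s ^ τ; A] ≤ P(A) + (s - 1) / (1 - ρ s) · E[W m; A]`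
for every `A ∈ 𝓕 m`, which is the bound on the conditional expectation.
-/

open Real MeasureTheory Filter Set

theorem exp_mul_sub_one_sub_le {t : ℝ} (ht₀ : 0 ≤ t) (ht₁ : t ≤ 1) {y : ℝ} (hy : 0 ≤ y) :
    exp (t * y) - 1 - t * y ≤ t ^ 2 * (exp y - 1 - y) := by
  let gap : ℝ → ℝ := fun y ↦ t ^ 2 * (exp y - 1 - y) - (exp (t * y) - 1 - t * y)
  have hderiv (y : ℝ) : HasDerivAt gap (t * (t * exp y + (1 - t) - exp (t * y))) y := by
    have := (((hasDerivAt_exp y).sub_const 1).sub (hasDerivAt_id' y)).const_mul (t ^ 2) |>.sub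
      ((((hasDerivAt_id' y).const_mul t).exp.sub_const 1).sub ((hasDerivAt_id' y).const_mul t))
    exact this.congr_deriv (by ring)
  have hconvex (y : ℝ) : exp (t * y) ≤ t * exp y + (1 - t) := by
    have := convexOn_exp.2 (mem_univ 0) (mem_univ y) (sub_nonneg.2 ht₁) ht₀ (by ring)
    simp only [smul_eq_mul, mul_zero, zero_add, exp_zero, mul_one] at this
    linarith
  have hmono : MonotoneOn gap (Ici 0) :=
    monotoneOn_of_hasDerivWithinAt_nonneg (convex_Ici 0)
      (fun y _ ↦ (hderiv y).continuousAt.continuousWithinAt)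
      (fun y _ ↦ (hderiv y).hasDerivWithinAt)
      (fun y _ ↦ mul_nonneg ht₀ (sub_nonneg.2 (hconvex y)))
  have := hmono self_mem_Ici hy hy
  simp only [gap, mul_zero, exp_zero] at this
  linarith

theorem exp_le_one_add_add_mul_sq {lam k η x : ℝ} (hlam : 0 < lam) (hk : 0 < k) (hη₀ : 0 ≤ η)
    (hηlam : η ≤ lam) (hx : |x| ≤ k) :
    exp (η * x) ≤ 1 + η * x + (exp (lam * k) - 1 - lam * k) / lam ^ 2 * η ^ 2 := by
  have habs : exp (η * x) - 1 - η * x ≤ exp (η * |x|) - 1 - η * |x| := by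
    rcases abs_cases x with ⟨hax, -⟩ | ⟨hax, hx₀⟩
    · rw [hax]
    · have hu := self_le_sinh_iff.2 (mul_nonneg hη₀ (neg_nonneg.2 hx₀.le))
      rw [sinh_eq, mul_neg, neg_neg] at hu
      rw [hax, mul_neg]
      linarith
  have hlk : 0 < lam * k := mul_pos hlam hk
  set t := η * |x| / (lam * k)
  have ht₀ : 0 ≤ t := by positivity
  have ht : t ≤ η / lam := by
    rw [div_le_div_iff₀ hlk hlam]
    nlinarith [mul_le_mul_of_nonneg_left hx hη₀]
  have ht₁ : t ≤ 1 := ht.trans ((div_le_one hlam).2 hηlam)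
  have hgap := exp_mul_sub_one_sub_le ht₀ ht₁ hlk.le
  rw [div_mul_cancel₀ _ hlk.ne'] at hgap
  have hE : 0 ≤ exp (lam * k) - 1 - lam * k := by linarith [add_one_le_exp (lam * k)]
  have : t ^ 2 * (exp (lam * k) - 1 - lam * k) ≤
      (exp (lam * k) - 1 - lam * k) / lam ^ 2 * η ^ 2 :=
    calc _ ≤ (η / lam) ^ 2 * (exp (lam * k) - 1 - lam * k) :=
          mul_le_mul_of_nonneg_right (pow_le_pow_left₀ ht₀ ht 2) hE
      _ = _ := by ring
  linarith

theorem ENat.coe_lt_sInf_image_coe_iff {n : ℕ} {S : Set ℕ} :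
    (n : ℕ∞) < sInf ((↑) '' S) ↔ ∀ j ∈ S, n < j := by
  rw [← ENat.add_one_le_iff (ENat.natCast_ne_top n), le_sInf_iff, forall_mem_image]
  simp only [← Nat.cast_add_one, Nat.cast_le, Nat.add_one_le_iff]

theorem ENat.measurable_of_measurableSet_coe_lt {Ω : Type*} [MeasurableSpace Ω] {τ : Ω → ℕ∞}
    (hτ : ∀ n : ℕ, MeasurableSet {ω | (n : ℕ∞) < τ ω}) : Measurable τ := by
  refine ENat.measurable_iff.2 fun N ↦ ?_
  have : τ ⁻¹' {(N : ℕ∞)} = (⋂ j ∈ Iio N, {ω | (j : ℕ∞) < τ ω}) \ {ω | (N : ℕ∞) < τ ω} := by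
    ext ω
    simp only [mem_preimage, mem_singleton_iff, Set.mem_sdiff, mem_iInter, mem_ofPred_eq,
      mem_Iio, not_lt]
    generalize τ ω = t
    induction t using ENat.recTopCoe with
    | top => simp
    | coe M =>
      simp only [Nat.cast_inj, Nat.cast_lt, Nat.cast_le]
      exact ⟨by rintro rfl; exact ⟨fun _ ↦ id, le_rfl⟩,
        fun ⟨h, hMN⟩ ↦ hMN.antisymm (not_lt.1 fun hlt ↦ (h M hlt).false)⟩
  rw [this]
  exact (MeasurableSet.biInter (to_countable _) fun j _ ↦ hτ j).diff (hτ N)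

section CondExp

variable {Ω : Type*} {m m₀ : MeasurableSpace Ω} {μ : Measure Ω}

theorem condExp_ae_le_of_forall_setIntegral_le (hm : m ≤ m₀) [SigmaFinite (μ.trim hm)]
    {f g : Ω → ℝ} (hf : Integrable f μ) (hg : Integrable g μ) (hgm : StronglyMeasurable[m] g)
    (hfg : ∀ A, MeasurableSet[m] A → ∫ ω in A, f ω ∂μ ≤ ∫ ω in A, g ω ∂μ) :
    μ[f | m] ≤ᵐ[μ] g := by
  refine ae_of_ae_trim hm <| ae_le_of_forall_setIntegral_le
    (integrable_condExp.trim hm stronglyMeasurable_condExp) (hg.trim hm hgm) fun A hA _ ↦ ?_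
  rw [← setIntegral_trim hm stronglyMeasurable_condExp hA, ← setIntegral_trim hm hgm hA,
    setIntegral_condExp hm hf hA]
  exact hfg A hA

theorem setIntegral_mul_le_of_condExp_le (hm : m ≤ m₀) [SigmaFinite (μ.trim hm)]
    {B : Set Ω} (hB : MeasurableSet[m] B) {Z Y : Ω → ℝ} {a : ℝ} (hZm : StronglyMeasurable[m] Z)
    (hZ₀ : ∀ ω ∈ B, 0 ≤ Z ω) (hZ : Integrable Z μ) (hY : Integrable Y μ)
    (hZY : Integrable (Z * Y) μ) (hYa : ∀ᵐ ω ∂μ, ω ∈ B → μ[Y | m] ω ≤ a) :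
    ∫ ω in B, Z ω * Y ω ∂μ ≤ a * ∫ ω in B, Z ω ∂μ := by
  have hpull := condExp_mul_of_stronglyMeasurable_left hZm hZY hY
  calc ∫ ω in B, Z ω * Y ω ∂μ = ∫ ω in B, μ[Z * Y | m] ω ∂μ :=
        (setIntegral_condExp hm hZY hB).symm
    _ = ∫ ω in B, Z ω * μ[Y | m] ω ∂μ :=
        setIntegral_congr_ae (hm B hB) (hpull.mono fun _ h _ ↦ h)
    _ ≤ ∫ ω in B, Z ω * a ∂μ := by
      refine setIntegral_mono_ae_restrict (integrable_condExp.congr hpull).integrableOn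
        (hZ.mul_const a).integrableOn ?_
      rw [EventuallyLE, ae_restrict_iff' (hm B hB)]
      filter_upwards [hYa] with ω hω hωB
      exact mul_le_mul_of_nonneg_left (hω hωB) (hZ₀ ω hωB)
    _ = a * ∫ ω in B, Z ω ∂μ := by rw [integral_mul_const, mul_comm]

end CondExp

theorem integrable_exp_mul_of_ae_abs_le {Ω : Type*} [MeasurableSpace Ω] {μ : Measure Ω}
    [IsFiniteMeasure μ] {Y : Ω → ℝ} (hYm : AEStronglyMeasurable Y μ) {C : ℝ}
    (hYC : ∀ᵐ ω ∂μ, |Y ω| ≤ C) (a : ℝ) : Integrable (fun ω ↦ exp (a * Y ω)) μ := by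
  refine .of_bound (continuous_exp.comp_aestronglyMeasurable (hYm.const_mul a)) (exp (|a| * C)) ?_
  filter_upwards [hYC] with ω hω
  rw [norm_of_nonneg (exp_pos _).le, exp_le_exp]
  calc a * Y ω ≤ |a| * |Y ω| := by rw [← abs_mul]; exact le_abs_self _
    _ ≤ |a| * C := mul_le_mul_of_nonneg_left hω (abs_nonneg a)

section TailSum

variable {Ω : Type*} [MeasurableSpace Ω] {ν : Measure Ω} {τ : Ω → ℕ∞} {s : ℝ}

theorem ofReal_pow_le_one_add_sum (hs : 1 ≤ s) (N : ℕ) :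
    ENNReal.ofReal (s ^ N) ≤ 1 + ∑ n ∈ Finset.range N, ENNReal.ofReal ((s - 1) * s ^ n) := by
  have hterm (n : ℕ) : 0 ≤ (s - 1) * s ^ n :=
    mul_nonneg (sub_nonneg.2 hs) (pow_nonneg (zero_le_one.trans hs) n)
  rw [← ENNReal.ofReal_sum_of_nonneg fun n _ ↦ hterm n, ← ENNReal.ofReal_one,
    ← ENNReal.ofReal_add zero_le_one (Finset.sum_nonneg fun n _ ↦ hterm n), ← Finset.mul_sum,
    mul_comm, geom_sum_mul]
  simp

theorem lintegral_ofReal_pow_toNat_le (hτ : Measurable τ) (hs : 1 ≤ s) :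
    ∫⁻ ω, ENNReal.ofReal (s ^ (τ ω).toNat) ∂ν ≤
      ν univ + ∑' n : ℕ, ENNReal.ofReal ((s - 1) * s ^ n) * ν {ω | (n : ℕ∞) < τ ω} := by
  have hmeas (n : ℕ) : MeasurableSet {ω | (n : ℕ∞) < τ ω} :=
    hτ (.of_discrete : MeasurableSet (Ioi (n : ℕ∞)))
  calc ∫⁻ ω, ENNReal.ofReal (s ^ (τ ω).toNat) ∂ν
      ≤ ∫⁻ ω, 1 + ∑' n : ℕ, {ω | (n : ℕ∞) < τ ω}.indicator
          (fun _ ↦ ENNReal.ofReal ((s - 1) * s ^ n)) ω ∂ν := by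
        refine lintegral_mono fun ω ↦ ?_
        simp only [indicator_apply, mem_ofPred_eq]
        by_cases hω : τ ω = ⊤
        · -- `ENat.toNat ⊤ = 0`, so the integrand is `1` on `{τ = ⊤}`
          simp [hω]
        · obtain ⟨N, hN⟩ := ENat.ne_top_iff_exists.1 hω
          simp only [← hN, ENat.toNat_natCast]
          refine (ofReal_pow_le_one_add_sum hs N).trans (add_le_add_right ?_ 1)
          refine le_of_eq_of_le (Finset.sum_congr rfl fun n hn ↦ ?_) (ENNReal.sum_le_tsum _)
          rw [if_pos (Nat.cast_lt.2 (Finset.mem_range.1 hn))]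
    _ = _ := by
      rw [lintegral_add_left measurable_const, lintegral_const, one_mul,
        lintegral_tsum fun n ↦ (measurable_const.indicator (hmeas n)).aemeasurable]
      simp only [lintegral_indicator_const (hmeas _)]

variable [IsFiniteMeasure ν] {ρ R : ℝ}

theorem lintegral_ofReal_pow_toNat_le_of_tail (hτ : Measurable τ) (hs : 1 < s) (hρ : 0 ≤ ρ)
    (hρs : ρ * s < 1) (htail : ∀ n : ℕ, ν.real {ω | (n : ℕ∞) < τ ω} ≤ ρ ^ n * R) :
    ∫⁻ ω, ENNReal.ofReal (s ^ (τ ω).toNat) ∂ν ≤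
      ENNReal.ofReal (ν.real univ + R * ((s - 1) / (1 - ρ * s))) := by
  have hR : 0 ≤ R := by simpa using measureReal_nonneg.trans (htail 0)
  have hs₀ : 0 ≤ s - 1 := sub_nonneg.2 hs.le
  have hcoef (n : ℕ) : 0 ≤ (s - 1) * s ^ n := mul_nonneg hs₀ (pow_nonneg (by linarith) n)
  have hterm (n : ℕ) : 0 ≤ (s - 1) * R * (ρ * s) ^ n :=
    mul_nonneg (mul_nonneg hs₀ hR) (pow_nonneg (mul_nonneg hρ (by linarith)) n)
  have hsum : Summable fun n ↦ (s - 1) * R * (ρ * s) ^ n :=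
    (summable_geometric_of_lt_one (mul_nonneg hρ (by linarith)) hρs).mul_left _
  calc ∫⁻ ω, ENNReal.ofReal (s ^ (τ ω).toNat) ∂ν
      ≤ ν univ + ∑' n : ℕ, ENNReal.ofReal ((s - 1) * s ^ n) * ν {ω | (n : ℕ∞) < τ ω} :=
        lintegral_ofReal_pow_toNat_le hτ hs.le
    _ ≤ ENNReal.ofReal (ν.real univ) + ∑' n : ℕ, ENNReal.ofReal ((s - 1) * R * (ρ * s) ^ n) := by
      rw [ofReal_measureReal]
      gcongr with n
      rw [← ofReal_measureReal, ← ENNReal.ofReal_mul (hcoef n)]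
      refine ENNReal.ofReal_le_ofReal ?_
      calc (s - 1) * s ^ n * ν.real {ω | (n : ℕ∞) < τ ω} ≤ (s - 1) * s ^ n * (ρ ^ n * R) :=
            mul_le_mul_of_nonneg_left (htail n) (hcoef n)
        _ = (s - 1) * R * (ρ * s) ^ n := by ring
    _ = ENNReal.ofReal (ν.real univ + R * ((s - 1) / (1 - ρ * s))) := by
      rw [← ENNReal.ofReal_tsum_of_nonneg hterm hsum, ← ENNReal.ofReal_add measureReal_nonneg
        (tsum_nonneg hterm), tsum_mul_left, tsum_geometric_of_lt_one (by positivity) hρs]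
      congr 2
      ring

theorem integrable_pow_toNat_of_tail (hτ : Measurable τ) (hs : 1 < s) (hρ : 0 ≤ ρ)
    (hρs : ρ * s < 1) (htail : ∀ n : ℕ, ν.real {ω | (n : ℕ∞) < τ ω} ≤ ρ ^ n * R) :
    Integrable (fun ω ↦ s ^ (τ ω).toNat) ν :=
  ⟨((measurable_of_countable fun t : ℕ∞ ↦ s ^ t.toNat).comp hτ).aestronglyMeasurable,
    (hasFiniteIntegral_iff_ofReal (.of_forall fun _ ↦ by positivity)).2 <|
      (lintegral_ofReal_pow_toNat_le_of_tail hτ hs hρ hρs htail).trans_lt ENNReal.ofReal_lt_top⟩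

theorem integral_pow_toNat_le_of_tail (hτ : Measurable τ) (hs : 1 < s) (hρ : 0 ≤ ρ)
    (hρs : ρ * s < 1) (htail : ∀ n : ℕ, ν.real {ω | (n : ℕ∞) < τ ω} ≤ ρ ^ n * R) :
    ∫ ω, s ^ (τ ω).toNat ∂ν ≤ ν.real univ + R * ((s - 1) / (1 - ρ * s)) := by
  have hR : 0 ≤ R := by simpa using measureReal_nonneg.trans (htail 0)
  have hq : 0 ≤ (s - 1) / (1 - ρ * s) := div_nonneg (by linarith) (by linarith)
  rw [integral_eq_lintegral_of_nonneg_ae (.of_forall fun _ ↦ by positivity)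
    (integrable_pow_toNat_of_tail hτ hs hρ hρs htail).1]
  exact ENNReal.toReal_le_of_le_ofReal (by positivity)
    (lintegral_ofReal_pow_toNat_le_of_tail hτ hs hρ hρs htail)

end TailSum

section Lyapunov

variable {Ω : Type*} {m₀ : MeasurableSpace Ω} {μ : Measure Ω} {ℱ : Filtration ℕ m₀}
  {X : ℕ → Ω → ℝ} {K : ℝ}

/-- The event `{τ_{K,m} > n}`. -/
def staysAbove (X : ℕ → Ω → ℝ) (K : ℝ) (m n : ℕ) : Set Ω := {ω | ∀ j ≤ n, K < X (m + j) ω}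

theorem setOf_coe_lt_sInf_eq_staysAbove (m n : ℕ) :
    {ω | (n : ℕ∞) < sInf ((↑) '' {j : ℕ | X (m + j) ω ≤ K})} = staysAbove X K m n := by
  ext ω
  simp only [mem_ofPred_eq, ENat.coe_lt_sInf_image_coe_iff, staysAbove]
  exact ⟨fun h j hj ↦ not_le.1 fun hle ↦ (h j hle).not_ge hj,
    fun h j hj ↦ not_le.1 fun hle ↦ (h j hle).not_ge hj⟩

theorem measurableSet_staysAbove (hX : Adapted ℱ X) (m n : ℕ) :
    MeasurableSet[ℱ (m + n)] (staysAbove X K m n) := by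
  simp only [staysAbove, ofPred_forall]
  exact .iInter fun j ↦ .iInter fun hj ↦ measurableSet_lt measurable_const
    ((hX (m + j)).mono (ℱ.mono (show m + j ≤ m + n by omega)) le_rfl)

theorem staysAbove_succ_subset (m n : ℕ) : staysAbove X K m (n + 1) ⊆ staysAbove X K m n :=
  fun _ hω j hj ↦ hω j (by omega)

theorem ae_abs_sub_le_of_abs_sub_le {x₀ k : ℝ} (hX₀ : ∀ᵐ ω ∂μ, X 0 ω = x₀)
    (hinc : ∀ n, ∀ᵐ ω ∂μ, |X (n + 1) ω - X n ω| ≤ k) (n : ℕ) :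
    ∀ᵐ ω ∂μ, |X n ω - x₀| ≤ n * k := by
  filter_upwards [hX₀, ae_all_iff.2 hinc] with ω h₀ hω
  induction n with
  | zero => simp [h₀]
  | succ n ih =>
    calc |X (n + 1) ω - x₀| ≤ |X (n + 1) ω - X n ω| + |X n ω - x₀| := abs_sub_le _ _ _
      _ ≤ (n + 1 : ℕ) * k := by push_cast; linarith [hω n]

variable [IsFiniteMeasure μ] {k ε η c ρ : ℝ}

theorem integrable_exp_mul_sub (hX : Adapted ℱ X) {x₀ : ℝ} (hX₀ : ∀ᵐ ω ∂μ, X 0 ω = x₀)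
    (hinc : ∀ n, ∀ᵐ ω ∂μ, |X (n + 1) ω - X n ω| ≤ k) (a b : ℝ) (n : ℕ) :
    Integrable (fun ω ↦ exp (a * (X n ω - b))) μ := by
  refine integrable_exp_mul_of_ae_abs_le (C := n * k + |x₀ - b|)
    (((hX n).mono (ℱ.le n) le_rfl).sub_const b).aestronglyMeasurable ?_ a
  filter_upwards [ae_abs_sub_le_of_abs_sub_le hX₀ hinc n] with ω hω
  linarith [abs_sub_le (X n ω) x₀ b]

theorem setIntegral_exp_succ_le (hX : Adapted ℱ X) {j : ℕ} {B : Set Ω}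
    (hB : MeasurableSet[ℱ j] B) (hBK : ∀ ω ∈ B, K ≤ X j ω)
    (hW : Integrable (fun ω ↦ exp (η * (X j ω - K))) μ)
    (hW' : Integrable (fun ω ↦ exp (η * (X (j + 1) ω - K))) μ)
    (hinc : ∀ᵐ ω ∂μ, |X (j + 1) ω - X j ω| ≤ k)
    (hdrift : ∀ᵐ ω ∂μ, K ≤ X j ω → μ[fun ω' ↦ X (j + 1) ω' - X j ω' | ℱ j] ω ≤ -ε)
    (hη : 0 ≤ η) (hexp : ∀ x, |x| ≤ k → exp (η * x) ≤ 1 + η * x + c * η ^ 2)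
    (hρ : 1 + c * η ^ 2 - η * ε ≤ ρ) :
    ∫ ω in B, exp (η * (X (j + 1) ω - K)) ∂μ ≤ ρ * ∫ ω in B, exp (η * (X j ω - K)) ∂μ := by
  set W : Ω → ℝ := fun ω ↦ exp (η * (X j ω - K))
  set Δ : Ω → ℝ := fun ω ↦ X (j + 1) ω - X j ω
  have hXm (n : ℕ) : Measurable (X n) := (hX n).mono (ℱ.le n) le_rfl
  have hWm : StronglyMeasurable[ℱ j] W :=
    (measurable_exp.comp (((hX j).sub_const K).const_mul η)).stronglyMeasurable
  have hΔm : AEStronglyMeasurable Δ μ := ((hXm (j + 1)).sub (hXm j)).aestronglyMeasurable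
  have hΔ : Integrable Δ μ := .of_bound hΔm k (by simpa only [norm_eq_abs] using hinc)
  have hWΔ : Integrable (fun ω ↦ W ω * Δ ω) μ :=
    hW.mul_bdd hΔm (by simpa only [norm_eq_abs] using hinc)
  have hpoint : ∀ᵐ ω ∂μ,
      exp (η * (X (j + 1) ω - K)) ≤ (1 + c * η ^ 2) * W ω + η * (W ω * Δ ω) := by
    filter_upwards [hinc] with ω hω
    have hsplit : exp (η * (X (j + 1) ω - K)) = W ω * exp (η * Δ ω) := by
      rw [← exp_add]; congr 1; ring
    rw [hsplit]
    nlinarith [mul_le_mul_of_nonneg_left (hexp _ hω) (exp_pos (η * (X j ω - K))).le]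
  have hcond : ∫ ω in B, W ω * Δ ω ∂μ ≤ -ε * ∫ ω in B, W ω ∂μ :=
    setIntegral_mul_le_of_condExp_le (ℱ.le j) hB hWm (fun _ _ ↦ (exp_pos _).le) hW hΔ hWΔ
      (by filter_upwards [hdrift] with ω hω hωB using hω (hBK ω hωB))
  have hW₀ : 0 ≤ ∫ ω in B, W ω ∂μ := integral_nonneg fun _ ↦ (exp_pos _).le
  calc ∫ ω in B, exp (η * (X (j + 1) ω - K)) ∂μ
      ≤ ∫ ω in B, (1 + c * η ^ 2) * W ω + η * (W ω * Δ ω) ∂μ :=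
        setIntegral_mono_ae hW'.integrableOn
          ((hW.const_mul _).add (hWΔ.const_mul η)).integrableOn hpoint
    _ = (1 + c * η ^ 2) * ∫ ω in B, W ω ∂μ + η * ∫ ω in B, W ω * Δ ω ∂μ := by
      rw [integral_add (hW.const_mul _).integrableOn (hWΔ.const_mul η).integrableOn,
        integral_const_mul, integral_const_mul]
    _ ≤ ρ * ∫ ω in B, W ω ∂μ := by nlinarith [mul_le_mul_of_nonneg_left hcond hη]

theorem setIntegral_exp_staysAbove_le (hX : Adapted ℱ X) {m : ℕ} {A : Set Ω}
    (hA : MeasurableSet[ℱ m] A) (hW : ∀ n, Integrable (fun ω ↦ exp (η * (X n ω - K))) μ)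
    (hinc : ∀ n, ∀ᵐ ω ∂μ, |X (n + 1) ω - X n ω| ≤ k)
    (hdrift : ∀ n, ∀ᵐ ω ∂μ, K ≤ X n ω → μ[fun ω' ↦ X (n + 1) ω' - X n ω' | ℱ n] ω ≤ -ε)
    (hη : 0 ≤ η) (hexp : ∀ x, |x| ≤ k → exp (η * x) ≤ 1 + η * x + c * η ^ 2)
    (hρ₀ : 0 ≤ ρ) (hρ : 1 + c * η ^ 2 - η * ε ≤ ρ) (n : ℕ) :
    ∫ ω in A ∩ staysAbove X K m n, exp (η * (X (m + n) ω - K)) ∂μ ≤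
      ρ ^ n * ∫ ω in A, exp (η * (X m ω - K)) ∂μ := by
  have hW₀ (n : ℕ) : 0 ≤ᵐ[μ] fun ω ↦ exp (η * (X n ω - K)) := .of_forall fun _ ↦ (exp_pos _).le
  induction n with
  | zero =>
    rw [pow_zero, one_mul]
    exact setIntegral_mono_set (hW m).integrableOn (ae_restrict_of_ae (hW₀ m))
      inter_subset_left.eventuallyLE
  | succ n ih =>
    have hB : MeasurableSet[ℱ (m + n)] (A ∩ staysAbove X K m n) :=
      (ℱ.mono (Nat.le_add_right m n) A hA).inter (measurableSet_staysAbove hX m n)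
    calc ∫ ω in A ∩ staysAbove X K m (n + 1), exp (η * (X (m + n + 1) ω - K)) ∂μ
        ≤ ∫ ω in A ∩ staysAbove X K m n, exp (η * (X (m + n + 1) ω - K)) ∂μ :=
          setIntegral_mono_set (hW _).integrableOn (ae_restrict_of_ae (hW₀ _))
            (inter_subset_inter_right A (staysAbove_succ_subset m n)).eventuallyLE
      _ ≤ ρ * ∫ ω in A ∩ staysAbove X K m n, exp (η * (X (m + n) ω - K)) ∂μ :=
          setIntegral_exp_succ_le hX hB (fun ω hω ↦ (hω.2 n le_rfl).le) (hW _) (hW _) (hinc _)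
            (hdrift _) hη hexp hρ
      _ ≤ ρ ^ (n + 1) * ∫ ω in A, exp (η * (X m ω - K)) ∂μ := by
          rw [pow_succ', mul_assoc]
          exact mul_le_mul_of_nonneg_left ih hρ₀

theorem measureReal_inter_staysAbove_le (hX : Adapted ℱ X) {m : ℕ} {A : Set Ω}
    (hA : MeasurableSet[ℱ m] A) (hW : ∀ n, Integrable (fun ω ↦ exp (η * (X n ω - K))) μ)
    (hinc : ∀ n, ∀ᵐ ω ∂μ, |X (n + 1) ω - X n ω| ≤ k)
    (hdrift : ∀ n, ∀ᵐ ω ∂μ, K ≤ X n ω → μ[fun ω' ↦ X (n + 1) ω' - X n ω' | ℱ n] ω ≤ -ε)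
    (hη : 0 ≤ η) (hexp : ∀ x, |x| ≤ k → exp (η * x) ≤ 1 + η * x + c * η ^ 2)
    (hρ₀ : 0 ≤ ρ) (hρ : 1 + c * η ^ 2 - η * ε ≤ ρ) (n : ℕ) :
    μ.real (A ∩ staysAbove X K m n) ≤ ρ ^ n * ∫ ω in A, exp (η * (X m ω - K)) ∂μ := by
  have hB : MeasurableSet (A ∩ staysAbove X K m n) :=
    (ℱ.le m A hA).inter (ℱ.le _ _ (measurableSet_staysAbove hX m n))
  calc μ.real (A ∩ staysAbove X K m n) = ∫ _ in A ∩ staysAbove X K m n, (1 : ℝ) ∂μ := by simp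
    _ ≤ ∫ ω in A ∩ staysAbove X K m n, exp (η * (X (m + n) ω - K)) ∂μ :=
        setIntegral_mono_on (integrable_const 1).integrableOn (hW _).integrableOn hB
          fun ω hω ↦ one_le_exp (mul_nonneg hη (sub_nonneg.2 (hω.2 n le_rfl).le))
    _ ≤ ρ ^ n * ∫ ω in A, exp (η * (X m ω - K)) ∂μ :=
        setIntegral_exp_staysAbove_le hX hA hW hinc hdrift hη hexp hρ₀ hρ n

end Lyapunov

theorem stmt_2_general
    {Ω : Type*} {m0 : MeasurableSpace Ω} {μ : Measure Ω} [IsProbabilityMeasure μ]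
    (ℱ : Filtration ℕ m0) (X : ℕ → Ω → ℝ) (hadp : Adapted ℱ X)
    (x0 : ℝ) (hX0 : ∀ᵐ ω ∂μ, X 0 ω = x0)
    (k ε K : ℝ) (hk : 0 < k)
    (hbdd : ∀ n : ℕ, ∀ᵐ ω ∂μ, |X (n + 1) ω - X n ω| ≤ k)
    (hdrift : ∀ n : ℕ, ∀ᵐ ω ∂μ, K ≤ X n ω →
      (μ[(fun ω' => X (n + 1) ω' - X n ω') | ℱ n]) ω ≤ -ε)
    (lam : ℝ) (hlam : 0 < lam)
    (c η ρ : ℝ)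
    (hc : c = (Real.exp (lam * k) - 1 - lam * k) / lam ^ 2)
    (hη0 : 0 < η) (hηlt : η < min lam (ε / (2 * c)))
    (hρ : ρ = 1 - η * ε / 2)
    (τ : ℕ → Ω → ℕ∞)
    (hτ : ∀ m ω, τ m ω = sInf ((fun n : ℕ => (n : ℕ∞)) '' {n : ℕ | X (m + n) ω ≤ K})) :
    ∀ m : ℕ, ∀ s : ℝ, 1 < s → s < ρ⁻¹ → ∀ᵐ ω ∂μ,
      (μ[(fun ω' => s ^ (τ m ω').toNat) | ℱ m]) ω ≤
        Real.exp (η * (X m ω - K)) * ((s - 1) / (1 - ρ * s)) + 1 := by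
  intro m s hs1 hs2
  have hρ₀ : 0 < ρ := inv_pos.1 ((zero_lt_one.trans hs1).trans hs2)
  have hρs : ρ * s < 1 := by simpa [hρ₀.ne'] using mul_lt_mul_of_pos_left hs2 hρ₀
  have hc₀ : 0 < c :=
    hc ▸ div_pos (by linarith [add_one_lt_exp (mul_pos hlam hk).ne']) (by positivity)
  have hcontr : 1 + c * η ^ 2 - η * ε ≤ ρ := by
    have := (lt_div_iff₀ (by positivity)).1 (lt_min_iff.1 hηlt).2
    rw [hρ]
    nlinarith
  have hexp (x : ℝ) (hx : |x| ≤ k) : exp (η * x) ≤ 1 + η * x + c * η ^ 2 :=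
    hc ▸ exp_le_one_add_add_mul_sq hlam hk hη0.le (lt_min_iff.1 hηlt).1.le hx
  have hW := integrable_exp_mul_sub hadp hX0 hbdd η K
  have hτS (n : ℕ) : {ω | (n : ℕ∞) < τ m ω} = staysAbove X K m n := by
    simpa only [hτ] using setOf_coe_lt_sInf_eq_staysAbove m n
  have hτS_measurable (n : ℕ) := hτS n ▸ ℱ.le _ _ (measurableSet_staysAbove hadp m n)
  have htail (A : Set Ω) (hA : MeasurableSet[ℱ m] A) (n : ℕ) :
      (μ.restrict A).real {ω | (n : ℕ∞) < τ m ω} ≤ ρ ^ n * ∫ ω in A, exp (η * (X m ω - K)) ∂μ := by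
    rw [measureReal_restrict_apply (hτS_measurable n), inter_comm, hτS]
    exact measureReal_inter_staysAbove_le hadp hA hW hbdd hdrift hη0.le hexp hρ₀.le hcontr n
  have hτm : Measurable (τ m) := ENat.measurable_of_measurableSet_coe_lt hτS_measurable
  refine condExp_ae_le_of_forall_setIntegral_le (ℱ.le m) ?_ ?_ ?_ fun A hA ↦ ?_
  · simpa using integrable_pow_toNat_of_tail hτm hs1 hρ₀.le hρs (htail univ .univ)
  · exact ((hW m).mul_const _).add (integrable_const 1)
  · exact ((measurable_exp.comp (((hadp m).sub_const K).const_mul η)).mul_const _).add_const 1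
      |>.stronglyMeasurable
  · calc ∫ ω in A, s ^ (τ m ω).toNat ∂μ
        ≤ μ.real A + (∫ ω in A, exp (η * (X m ω - K)) ∂μ) * ((s - 1) / (1 - ρ * s)) := by
          simpa using integral_pow_toNat_le_of_tail hτm hs1 hρ₀.le hρs (htail A hA)
      _ = ∫ ω in A, exp (η * (X m ω - K)) * ((s - 1) / (1 - ρ * s)) + 1 ∂μ := by
          rw [integral_add ((hW m).mul_const _).integrableOn (integrable_const 1).integrableOn,
            integral_mul_const, setIntegral_const, smul_eq_mul, mul_one, add_comm]

theorem stmt_2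
    {Ω : Type*} {m0 : MeasurableSpace Ω} {μ : Measure Ω} [IsProbabilityMeasure μ]
    (ℱ : Filtration ℕ m0) (X : ℕ → Ω → ℝ) (hadp : Adapted ℱ X)
    (x0 : ℝ) (hX0 : ∀ᵐ ω ∂μ, X 0 ω = x0)
    (k ε K : ℝ) (hk : 0 < k) (hε0 : 0 < ε) (hεk : ε ≤ k)
    (hbdd : ∀ n : ℕ, ∀ᵐ ω ∂μ, |X (n + 1) ω - X n ω| ≤ k)
    (hdrift : ∀ n : ℕ, ∀ᵐ ω ∂μ, K ≤ X n ω →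
      (μ[(fun ω' => X (n + 1) ω' - X n ω') | ℱ n]) ω ≤ -ε)
    (lam : ℝ) (hlam : 0 < lam)
    (c η ρ D : ℝ)
    (hc : c = (Real.exp (lam * k) - 1 - lam * k) / lam ^ 2)
    (hη0 : 0 < η) (hηlt : η < min lam (ε / (2 * c)))
    (hρ : ρ = 1 - η * ε / 2)
    (hD : D = Real.exp (lam * k))
    (τ : ℕ → Ω → ℕ∞)
    (hτ : ∀ m ω, τ m ω = sInf ((fun n : ℕ => (n : ℕ∞)) '' {n : ℕ | X (m + n) ω ≤ K})) :
    ∀ m : ℕ, ∀ s : ℝ, 1 < s → s < ρ⁻¹ → ∀ᵐ ω ∂μ,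
      (μ[(fun ω' => s ^ (τ m ω').toNat) | ℱ m]) ω ≤
        Real.exp (η * (X m ω - K)) * ((s - 1) / (1 - ρ * s)) + 1 :=
  stmt_2_general ℱ X hadp x0 hX0 k ε K hk hbdd hdrift lam hlam c η ρ hc hη0 hηlt hρ τ hτ
end
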